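/- Any two spokes of a nice polygon P intersect. -/

import Mathlib

open Set Bornology

noncomputable section

/-- The cross product (determinant) of two plane vectors. -/
def cross2 (a b : ℝ × ℝ) : ℝ := a.1 * b.2 - a.2 * b.1

/-- A nice polygon: a convex polygon in the plane, with vertices `vtx 0, …, vtx (n-1)`
listed clockwise (every other vertex lies strictly to the right of every directed edge),
no two of whose sides are parallel.  The field `far i` records the unique vertex of the
polygon farthest from the line supporting the `i`-th edge. -/
structure NicePolygon where
  n : ℕ
  three_le : 3 ≤ n
  vtx : ZMod n → ℝ × ℝ
  strict_convex : ∀ i j : ZMod n, j ≠ i → j ≠ i + 1 →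
    cross2 (vtx (i + 1) - vtx i) (vtx j - vtx i) < 0
  no_parallel : ∀ i j : ZMod n, i ≠ j →
    cross2 (vtx (i + 1) - vtx i) (vtx (j + 1) - vtx j) ≠ 0
  far : ZMod n → ZMod n
  far_spec : ∀ i j : ZMod n, j ≠ far i →
    cross2 (vtx (i + 1) - vtx i) (vtx (far i) - vtx i) <
      cross2 (vtx (i + 1) - vtx i) (vtx j - vtx i)

namespace NicePolygon

variable (Q : NicePolygon)

/-- The polygon as a convex body. -/
def body : Set (ℝ × ℝ) := convexHull ℝ (Set.range Q.vtx)

def IsVertex (v : ℝ × ℝ) : Prop := ∃ i, Q.vtx i = v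

def edgeDir (i : ZMod Q.n) : ℝ × ℝ := Q.vtx (i + 1) - Q.vtx i

/-- The (oriented) edge `e_i` as a set. -/
def edgeSet (i : ZMod Q.n) : Set (ℝ × ℝ) := segment ℝ (Q.vtx i) (Q.vtx (i + 1))

/-- Signed coordinate with respect to the line through edge `i`. -/
def sgn (i : ZMod Q.n) (x : ℝ × ℝ) : ℝ := cross2 (Q.edgeDir i) (x - Q.vtx i)

/-- Signed distance datum of the farthest vertex from the line of edge `i`. -/
def depth (i : ZMod Q.n) : ℝ := Q.sgn i (Q.vtx (Q.far i))

/-- The vector `V_i = 2 (w - v)` where `v` is the head vertex of edge `i` and `w` the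
farthest vertex from the line of edge `i`. -/
def vvec (i : ZMod Q.n) : ℝ × ℝ := (2 : ℝ) • (Q.vtx (Q.far i) - Q.vtx (i + 1))

/-- The pinwheel strip `Σ_i`: it is bounded by the line `L` through edge `i` and the
parallel line `L'` such that the farthest vertex is equidistant from `L` and `L'`. -/
def strip (i : ZMod Q.n) : Set (ℝ × ℝ) := {x | Q.sgn i x ∈ Set.uIcc 0 (2 * Q.depth i)}

/-- The strip map `μ_i`: the identity on the interior of the strip; otherwise move by
`± V_i`, whichever is closer to the strip. -/
def stripMap (i : ZMod Q.n) (x : ℝ × ℝ) : ℝ × ℝ := by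
  classical
  exact
    if x ∈ interior (Q.strip i) then x
    else if Metric.infDist (x + Q.vvec i) (Q.strip i)
            < Metric.infDist (x - Q.vvec i) (Q.strip i) then x + Q.vvec i
    else if Metric.infDist (x - Q.vvec i) (Q.strip i)
            < Metric.infDist (x + Q.vvec i) (Q.strip i) then x - Q.vvec i
    else x

/-- The pinwheel map `ψ*` on `ℝ² × ℤ/n`. -/
def pinwheel (pk : (ℝ × ℝ) × ZMod Q.n) : (ℝ × ℝ) × ZMod Q.n := by
  classical
  exact
    if Q.stripMap (pk.2 + 1) pk.1 = pk.1 then (pk.1, pk.2 + 1)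
    else (Q.stripMap (pk.2 + 1) pk.1, pk.2)

/-- The outer billiards relation: the segment from `x` to `y` is tangent to the polygon
at its midpoint and the polygon lies (weakly) to the right of the ray from `x` to `y`. -/
def obRel (x y : ℝ × ℝ) : Prop :=
  x ∉ Q.body ∧ midpoint ℝ x y ∈ Q.body ∧ ∀ z ∈ Q.body, cross2 (y - x) (z - x) ≤ 0

/-- The square outer billiards map `ψ`, as a relation; it is the identity on the
polygon itself. -/
def sqRel (p q : ℝ × ℝ) : Prop :=
  (p ∈ Q.body ∧ q = p) ∨ ∃ r, Q.obRel p r ∧ Q.obRel r q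

/-- The tile of the forward partition labelled by the ordered vertex pair `(v, w)`:
the set of points whose first tangent vertex is `v` and whose second is `w`, so that
`ψ(p) = p + 2(w - v)` there. -/
def tile (v w : ℝ × ℝ) : Set (ℝ × ℝ) :=
  {p | Q.obRel p ((2 : ℝ) • v - p) ∧
       Q.obRel ((2 : ℝ) • v - p) ((2 : ℝ) • w - (2 : ℝ) • v + p)}

/-- The value of the square outer billiards map on the tile labelled `(v, w)`. -/
def psiOn (v w p : ℝ × ℝ) : ℝ × ℝ := p + (2 : ℝ) • (w - v)

/-- A (nonempty) tile of the forward partition. -/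
def IsForwardTile (T : Set (ℝ × ℝ)) : Prop :=
  ∃ v w, Q.IsVertex v ∧ Q.IsVertex w ∧ T = Q.tile v w ∧ T.Nonempty

/-- A strip: the region between two distinct parallel lines. -/
def IsStrip (S : Set (ℝ × ℝ)) : Prop :=
  ∃ (d : ℝ × ℝ) (c₁ c₂ : ℝ), d ≠ 0 ∧ c₁ < c₂ ∧
    S = {x | c₁ ≤ cross2 d x ∧ cross2 d x ≤ c₂}

/-- A minimal strip: it contains the interior of the polygon in its interior and
no proper sub-strip does so. -/
def IsMinimalStrip (S : Set (ℝ × ℝ)) : Prop :=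
  IsStrip S ∧ interior Q.body ⊆ interior S ∧
    ∀ S', IsStrip S' → interior Q.body ⊆ interior S' → S' ⊆ S → S' = S

/-- `(v, w)` is a maximal pair: some minimal strip has `v` and `w` on its two distinct
boundary lines. -/
def MaximalPair (v w : ℝ × ℝ) : Prop :=
  Q.IsVertex v ∧ Q.IsVertex w ∧
    ∃ (d : ℝ × ℝ) (c₁ c₂ : ℝ), d ≠ 0 ∧ c₁ < c₂ ∧
      Q.IsMinimalStrip {x | c₁ ≤ cross2 d x ∧ cross2 d x ≤ c₂} ∧
      ((cross2 d v = c₁ ∧ cross2 d w = c₂) ∨ (cross2 d v = c₂ ∧ cross2 d w = c₁))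

/-- A spoke: the segment joining the two vertices of a maximal pair. -/
def IsSpoke (S : Set (ℝ × ℝ)) : Prop := ∃ v w, Q.MaximalPair v w ∧ S = segment ℝ v w

/-- The spoke assigned to edge `i` by the clockwise correspondence: it joins the head
vertex of edge `i` to the vertex farthest from the line through edge `i`. -/
def spoke (i : ZMod Q.n) : Set (ℝ × ℝ) := segment ℝ (Q.vtx (i + 1)) (Q.vtx (Q.far i))

/-- The endpoint pair of the spoke `S_i`. -/
def spokeEnds (i : ZMod Q.n) : Set (ℝ × ℝ) := {Q.vtx (i + 1), Q.vtx (Q.far i)}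

/-- `S_j` is special if `S_{j-1}`, `S_j`, `S_{j+1}` share a common vertex. -/
def SpecialSpoke (j : ZMod Q.n) : Prop :=
  (Q.spokeEnds (j - 1) ∩ Q.spokeEnds j ∩ Q.spokeEnds (j + 1)).Nonempty

/-- The boundary arc starting at vertex `i` and going clockwise through `s` edges. -/
def cwArc (i : ZMod Q.n) (s : ℕ) : Set (ℝ × ℝ) :=
  ⋃ t ∈ Finset.range s,
    segment ℝ (Q.vtx (i + (t : ZMod Q.n))) (Q.vtx (i + (t : ZMod Q.n) + 1))

/-- `x` is a vertex on the clockwise path along the boundary from `v` to `w`. -/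
def OnCwArc (v x w : ℝ × ℝ) : Prop :=
  ∃ (i : ZMod Q.n) (s t : ℕ), s < Q.n ∧ t ≤ s ∧
    v = Q.vtx i ∧ w = Q.vtx (i + (s : ZMod Q.n)) ∧ x = Q.vtx (i + (t : ZMod Q.n))

/-- `(v, x)` is an admissible pair: `x` lies on the clockwise path from `v` to some
vertex `w` making `(v, w)` a maximal pair. -/
def AdmissiblePair (v x : ℝ × ℝ) : Prop := ∃ w, Q.MaximalPair v w ∧ Q.OnCwArc v x w

/-- An arc of the boundary of the polygon with endpoints `p` and `q`. -/
def IsBdryArcFromTo (A : Set (ℝ × ℝ)) (p q : ℝ × ℝ) : Prop :=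
  ∃ (i : ZMod Q.n) (s : ℕ), s ≤ Q.n ∧
    ((p = Q.vtx i ∧ q = Q.vtx (i + (s : ZMod Q.n))) ∨
     (q = Q.vtx i ∧ p = Q.vtx (i + (s : ZMod Q.n)))) ∧
    A = Q.cwArc i s

/-- Four vertices in counterclockwise cyclic order on the boundary (the vertices are
indexed clockwise, so counterclockwise order is decreasing index). -/
def CcwOrdered4 (p₁ p₂ p₃ p₄ : ℝ × ℝ) : Prop :=
  ∃ (i : ZMod Q.n) (t₂ t₃ t₄ : ℕ), 0 < t₂ ∧ t₂ < t₃ ∧ t₃ < t₄ ∧ t₄ < Q.n ∧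
    p₁ = Q.vtx i ∧ p₂ = Q.vtx (i - (t₂ : ZMod Q.n)) ∧
    p₃ = Q.vtx (i - (t₃ : ZMod Q.n)) ∧ p₄ = Q.vtx (i - (t₄ : ZMod Q.n))

end NicePolygon

/-- An admissible path of a nice polygon: an odd number of spokes traversed compatibly
with the cyclic order of the spokes (indices lifted to `ℤ`, strictly increasing, and
not wrapping all the way around the polygon), with consecutive spokes sharing an
endpoint; `ept k` is the initial endpoint of the `k`-th spoke of the path and
`ept len` the final endpoint. -/
structure AdmissiblePath (Q : NicePolygon) where
  len : ℕ
  pos : 0 < len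
  odd : Odd len
  idx : Fin len → ℤ
  mono : StrictMono idx
  base_nonneg : 0 ≤ idx ⟨0, pos⟩
  base_lt : idx ⟨0, pos⟩ < (Q.n : ℤ)
  span : idx ⟨len - 1, by omega⟩ - idx ⟨0, pos⟩ < (Q.n : ℤ)
  ept : Fin (len + 1) → ℝ × ℝ
  spoke_eq : ∀ k : Fin len,
    ({ept k.castSucc, ept k.succ} : Set (ℝ × ℝ)) = Q.spokeEnds ((idx k : ZMod Q.n))

namespace AdmissiblePath

variable {Q : NicePolygon} (γ : AdmissiblePath Q)

/-- The index `a` of the first spoke of the path `a → b`. -/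
def aIdx : ℤ := γ.idx ⟨0, γ.pos⟩

/-- The index `b` of the last spoke of the path `a → b`. -/
def bIdx : ℤ := γ.idx ⟨γ.len - 1, by have := γ.pos; omega⟩

/-- The first vertex of the path. -/
def firstV : ℝ × ℝ := γ.ept 0

/-- The last vertex of the path. -/
def lastV : ℝ × ℝ := γ.ept (Fin.last γ.len)

/-- The tile `T(a → b)` of the forward partition corresponding to the path. -/
def tileSet : Set (ℝ × ℝ) := Q.tile γ.firstV γ.lastV

end AdmissiblePath

namespace NicePolygon

variable (Q : NicePolygon)

/-- Forward-unbounded orbits of the square outer billiards map. -/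
def FwdUnbOrbitPsi (O : Set (ℝ × ℝ)) : Prop :=
  ∃ o : ℤ → ℝ × ℝ, (∀ t, Q.sqRel (o t) (o (t + 1))) ∧ O = Set.range o ∧
    ¬ Bornology.IsBounded (o '' Set.Ici (0 : ℤ))

/-- Forward-unbounded orbits of the pinwheel map. -/
def FwdUnbOrbitPin (O : Set ((ℝ × ℝ) × ZMod Q.n)) : Prop :=
  ∃ o : ℤ → (ℝ × ℝ) × ZMod Q.n, (∀ t, o (t + 1) = Q.pinwheel (o t)) ∧
    O = Set.range o ∧
    ¬ Bornology.IsBounded ((fun t => (o t).1) '' Set.Ici (0 : ℤ))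

/-- An orbit of the pinwheel map is natural (w.r.t. the section `ι`) if it lies in the
range of `ι` sufficiently far from the origin. -/
def NaturalOrbit (ι : ℝ × ℝ → (ℝ × ℝ) × ZMod Q.n)
    (O : Set ((ℝ × ℝ) × ZMod Q.n)) : Prop :=
  ∃ R : ℝ, ∀ x ∈ O, R < ‖x.1‖ → x ∈ Set.range ι

/-- `X̂ = ⋃_j Σ_j × {j}`. -/
def Xhat : Set ((ℝ × ℝ) × ZMod Q.n) := {pk | pk.1 ∈ Q.strip pk.2}

/-- The first-return relation of the pinwheel map to `X̂`. -/
def retRel (x y : (ℝ × ℝ) × ZMod Q.n) : Prop :=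
  x ∈ Q.Xhat ∧ ∃ r : ℕ, 1 ≤ r ∧ y = Q.pinwheel^[r] x ∧ y ∈ Q.Xhat ∧
    ∀ s, 1 ≤ s → s < r → Q.pinwheel^[s] x ∉ Q.Xhat

/-- Forward-unbounded orbits of the first-return map `ψ̂` of the pinwheel map to `X̂`. -/
def FwdUnbOrbitRet (O : Set ((ℝ × ℝ) × ZMod Q.n)) : Prop :=
  ∃ o : ℤ → (ℝ × ℝ) × ZMod Q.n, (∀ t, Q.retRel (o t) (o (t + 1))) ∧
    O = Set.range o ∧
    ¬ Bornology.IsBounded ((fun t => (o t).1) '' Set.Ici (0 : ℤ))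

/-- The first-return relation `Ψ` of the square outer billiards map to the strip `Σ₁`. -/
def psiRetRel (p q : ℝ × ℝ) : Prop :=
  p ∈ Q.strip 1 ∧ q ∈ Q.strip 1 ∧
    ∃ (r : ℕ) (o : ℕ → ℝ × ℝ), 1 ≤ r ∧ o 0 = p ∧ o r = q ∧
      (∀ s < r, Q.sqRel (o s) (o (s + 1))) ∧
      ∀ s, 0 < s → s < r → o s ∉ Q.strip 1

/-- The pinwheel return map `Ψ̂ = (ψ̂)ⁿ` on `Σ₁` (identified with `Σ₁ × {1}`),
as a relation. -/
def hatPsiRel (p q : ℝ × ℝ) : Prop :=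
  ∃ o : ℕ → (ℝ × ℝ) × ZMod Q.n, o 0 = (p, 1) ∧ o Q.n = (q, 1) ∧
    ∀ s < Q.n, Q.retRel (o s) (o (s + 1))

/-- The polygon is quasirational if it can be rescaled so that the areas of the `n`
parallelograms `Σ_j ∩ Σ_{j+1}` are all integers. -/
def Quasirational : Prop :=
  ∃ lam : ℝ, 0 < lam ∧ ∀ j : ZMod Q.n, ∃ z : ℤ,
    lam ^ 2 * (MeasureTheory.volume (Q.strip j ∩ Q.strip (j + 1))).toReal = (z : ℝ)

end NicePolygon

/-- Forward-unbounded orbits of a relation on the plane. -/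
def FwdUnbOrbitRel (Rel : ℝ × ℝ → ℝ × ℝ → Prop) (O : Set (ℝ × ℝ)) : Prop :=
  ∃ o : ℤ → ℝ × ℝ, (∀ t, Rel (o t) (o (t + 1))) ∧ O = Set.range o ∧
    ¬ Bornology.IsBounded (o '' Set.Ici (0 : ℤ))

section SpokesIntersect

private lemma cross2_smul_right (d u : ℝ × ℝ) (μ : ℝ) : cross2 d (μ • u) = μ * cross2 d u := by
  simp only [cross2, Prod.smul_fst, Prod.smul_snd, smul_eq_mul]; ring

private lemma cross2_smul_left (d u : ℝ × ℝ) (μ : ℝ) : cross2 (μ • d) u = μ * cross2 d u := by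
  simp only [cross2, Prod.smul_fst, Prod.smul_snd, smul_eq_mul]; ring

private lemma cross2_sub_right (d x y : ℝ × ℝ) : cross2 d (x - y) = cross2 d x - cross2 d y := by
  simp only [cross2, Prod.fst_sub, Prod.snd_sub]; ring

private lemma cross2_skew (x y : ℝ × ℝ) : cross2 x y = - cross2 y x := by
  simp only [cross2]; ring

private lemma cross2_neg_left (d x : ℝ × ℝ) : cross2 (-d) x = - cross2 d x := by
  simp only [cross2, Prod.fst_neg, Prod.snd_neg]; ring

private lemma cross2_self (d : ℝ × ℝ) : cross2 d d = 0 := by simp only [cross2]; ring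

private lemma cross2_affine (d v w : ℝ × ℝ) (s : ℝ) :
    cross2 d (v + s • (w - v)) = cross2 d v + s * (cross2 d w - cross2 d v) := by
  simp only [cross2, Prod.fst_add, Prod.snd_add, Prod.smul_fst, Prod.smul_snd,
    Prod.fst_sub, Prod.snd_sub, smul_eq_mul]
  ring

private lemma prod_ne_zero {d : ℝ × ℝ} (hd : d ≠ 0) : d.1 ≠ 0 ∨ d.2 ≠ 0 := by
  by_contra h
  push_neg at h
  exact hd (Prod.ext h.1 h.2)

private lemma cross2_eq_zero_parallel {d u : ℝ × ℝ} (hd : d ≠ 0) (h : cross2 d u = 0) :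
    ∃ μ : ℝ, u = μ • d := by
  simp only [cross2] at h
  rcases prod_ne_zero hd with h1 | h2
  · refine ⟨u.1 / d.1, Prod.ext ?_ ?_⟩
    · simp only [Prod.smul_fst, smul_eq_mul]; field_simp
    · simp only [Prod.smul_snd, smul_eq_mul]; field_simp; linear_combination h
  · refine ⟨u.2 / d.2, Prod.ext ?_ ?_⟩
    · simp only [Prod.smul_fst, smul_eq_mul]; field_simp; linear_combination -h
    · simp only [Prod.smul_snd, smul_eq_mul]; field_simp

private lemma cross2_surj {d : ℝ × ℝ} (hd : d ≠ 0) (r : ℝ) : ∃ x : ℝ × ℝ, cross2 d x = r := by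
  have hK : 0 < d.1 ^ 2 + d.2 ^ 2 := by
    rcases prod_ne_zero hd with h | h
    · positivity
    · positivity
  refine ⟨(-(d.2) * (r / (d.1 ^ 2 + d.2 ^ 2)), d.1 * (r / (d.1 ^ 2 + d.2 ^ 2))), ?_⟩
  simp only [cross2]
  field_simp
  ring

private lemma le_limit_lemma {fx fz c : ℝ} (hz : c ≤ fz)
    (h : ∀ θ : ℝ, 0 < θ → θ ≤ 1 → c ≤ fx + θ * (fz - fx)) : c ≤ fx := by
  by_contra h'
  push_neg at h'
  have hD : 0 < fz - fx := by linarith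
  have hθpos : 0 < (c - fx) / (2 * (fz - fx)) := div_pos (by linarith) (by linarith)
  have hθ1 : (c - fx) / (2 * (fz - fx)) ≤ 1 := by
    rw [div_le_one (by linarith)]; linarith
  have hh := h _ hθpos hθ1
  have hkey : (c - fx) / (2 * (fz - fx)) * (fz - fx) = (c - fx) / 2 := by
    field_simp
  rw [hkey] at hh
  linarith

private lemma interior_body_nonempty (Q : NicePolygon) {d : ℝ × ℝ} {c₁ c₂ : ℝ}
    (hd : d ≠ 0) (hc : c₁ < c₂)
    (hmin : Q.IsMinimalStrip {x | c₁ ≤ cross2 d x ∧ cross2 d x ≤ c₂}) :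
    (interior Q.body).Nonempty := by
  by_contra hne
  rw [Set.not_nonempty_iff_eq_empty] at hne
  have hstrip : NicePolygon.IsStrip {x | c₁ ≤ cross2 d x ∧ cross2 d x ≤ (c₁ + c₂) / 2} :=
    ⟨d, c₁, (c₁ + c₂) / 2, hd, by linarith, rfl⟩
  have heq := hmin.2.2 _ hstrip (by rw [hne]; exact Set.empty_subset _)
    (fun x hx => ⟨hx.1, by
      have h2 : cross2 d x ≤ (c₁ + c₂) / 2 := hx.2
      show cross2 d x ≤ c₂
      linarith⟩)
  obtain ⟨x, hx⟩ := cross2_surj hd c₂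
  have hxS : x ∈ {x | c₁ ≤ cross2 d x ∧ cross2 d x ≤ c₂} := ⟨by rw [hx]; linarith, by rw [hx]⟩
  rw [← heq] at hxS
  have h2 : cross2 d x ≤ (c₁ + c₂) / 2 := hxS.2
  rw [hx] at h2
  linarith

private lemma body_sub_strip (Q : NicePolygon) {d : ℝ × ℝ} {c₁ c₂ : ℝ}
    (hd : d ≠ 0) (hc : c₁ < c₂)
    (hmin : Q.IsMinimalStrip {x | c₁ ≤ cross2 d x ∧ cross2 d x ≤ c₂}) :
    ∀ x ∈ Q.body, c₁ ≤ cross2 d x ∧ cross2 d x ≤ c₂ := by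
  obtain ⟨z, hz⟩ := interior_body_nonempty Q hd hc hmin
  have hconv : Convex ℝ Q.body := convex_convexHull ℝ _
  have hzS : c₁ ≤ cross2 d z ∧ cross2 d z ≤ c₂ := by
    have := interior_subset (hmin.2.1 hz)
    simpa only [Set.mem_setOf_eq] using this
  intro x hx
  have key : ∀ θ : ℝ, 0 < θ → θ ≤ 1 →
      c₁ ≤ cross2 d x + θ * (cross2 d z - cross2 d x) ∧
      cross2 d x + θ * (cross2 d z - cross2 d x) ≤ c₂ := by
    intro θ h0 h1
    have hmem := hconv.add_smul_sub_mem_interior hx hz ⟨h0, h1⟩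
    have hmem' : c₁ ≤ cross2 d (x + θ • (z - x)) ∧ cross2 d (x + θ • (z - x)) ≤ c₂ := by
      have := interior_subset (hmin.2.1 hmem)
      simpa only [Set.mem_setOf_eq] using this
    rwa [cross2_affine] at hmem'
  constructor
  · exact le_limit_lemma hzS.1 (fun θ h0 h1 => (key θ h0 h1).1)
  · have := le_limit_lemma (fx := -(cross2 d x)) (fz := -(cross2 d z)) (c := -c₂)
      (by linarith [hzS.2]) (fun θ h0 h1 => by have := (key θ h0 h1).2; linarith)
    linarith

private lemma strip_consts_eq (Q : NicePolygon) {d : ℝ × ℝ} {c₁ c₂ a b : ℝ}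
    (hd : d ≠ 0) (hc : c₁ < c₂) (hab : a < b)
    (h1 : Q.IsMinimalStrip {x | c₁ ≤ cross2 d x ∧ cross2 d x ≤ c₂})
    (h2 : Q.IsMinimalStrip {x | a ≤ cross2 d x ∧ cross2 d x ≤ b}) :
    c₁ = a ∧ c₂ = b := by
  obtain ⟨z, hz⟩ := interior_body_nonempty Q hd hc h1
  obtain ⟨δ, hδ, hball⟩ := Metric.isOpen_iff.1 isOpen_interior z hz
  have hK : 0 < d.1 ^ 2 + d.2 ^ 2 := by
    rcases prod_ne_zero hd with h | h
    · positivity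
    · positivity
  set t : ℝ := δ / (|d.1| + |d.2| + 1) with htdef
  have habs1 : (0:ℝ) ≤ |d.1| := abs_nonneg _
  have habs2 : (0:ℝ) ≤ |d.2| := abs_nonneg _
  have ht : 0 < t := by positivity
  have htb : t * (|d.1| + |d.2| + 1) = δ := by
    rw [htdef]
    field_simp
  have hdist : ∀ u : ℝ, |u| ≤ |d.1| + |d.2| → |t * u| < δ := by
    intro u hu
    rw [abs_mul, abs_of_pos ht]
    nlinarith
  have hmem : ∀ (e : ℝ), e = 1 ∨ e = -1 →
      (z.1 - e * t * d.2, z.2 + e * t * d.1) ∈ interior Q.body := by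
    intro e he
    apply hball
    rw [Metric.mem_ball, Prod.dist_eq, Real.dist_eq, Real.dist_eq]
    apply max_lt
    · have : z.1 - e * t * d.2 - z.1 = -(t * (e * d.2)) := by ring
      rw [this, abs_neg]
      apply hdist
      rcases he with rfl | rfl
      · rw [one_mul]; linarith [le_abs_self d.2, abs_nonneg d.2]
      · rw [neg_one_mul, abs_neg]; linarith
    · have : z.2 + e * t * d.1 - z.2 = t * (e * d.1) := by ring
      rw [this]
      apply hdist
      rcases he with rfl | rfl
      · rw [one_mul]; linarith
      · rw [neg_one_mul, abs_neg]; linarith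
  have hval : ∀ (e : ℝ), cross2 d (z.1 - e * t * d.2, z.2 + e * t * d.1)
      = cross2 d z + e * t * (d.1 ^ 2 + d.2 ^ 2) := by
    intro e; simp only [cross2]; ring
  have hp1 := hmem 1 (Or.inl rfl)
  have hm1 := hmem (-1) (Or.inr rfl)
  have hp1S1 := interior_subset (h1.2.1 hp1)
  have hp1S2 := interior_subset (h2.2.1 hp1)
  have hm1S1 := interior_subset (h1.2.1 hm1)
  have hm1S2 := interior_subset (h2.2.1 hm1)
  rw [Set.mem_setOf_eq, hval 1] at hp1S1 hp1S2
  rw [Set.mem_setOf_eq, hval (-1)] at hm1S1 hm1S2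
  have hmaxmin : max c₁ a < min c₂ b := by
    have h1' : max c₁ a ≤ cross2 d z + (-1) * t * (d.1 ^ 2 + d.2 ^ 2) :=
      max_le hm1S1.1 hm1S2.1
    have h2' : cross2 d z + 1 * t * (d.1 ^ 2 + d.2 ^ 2) ≤ min c₂ b :=
      le_min hp1S1.2 hp1S2.2
    nlinarith [mul_pos ht hK]
  have hTstrip : NicePolygon.IsStrip {x | max c₁ a ≤ cross2 d x ∧ cross2 d x ≤ min c₂ b} :=
    ⟨d, _, _, hd, hmaxmin, rfl⟩
  have hTeq : {x | max c₁ a ≤ cross2 d x ∧ cross2 d x ≤ min c₂ b}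
      = {x | c₁ ≤ cross2 d x ∧ cross2 d x ≤ c₂} ∩ {x | a ≤ cross2 d x ∧ cross2 d x ≤ b} := by
    ext x
    simp only [Set.mem_setOf_eq, Set.mem_inter_iff, max_le_iff, le_min_iff]
    tauto
  have hTint : interior Q.body ⊆ interior {x | max c₁ a ≤ cross2 d x ∧ cross2 d x ≤ min c₂ b} := by
    rw [hTeq, interior_inter]
    exact Set.subset_inter h1.2.1 h2.2.1
  have e1 := h1.2.2 _ hTstrip hTint (by rw [hTeq]; exact Set.inter_subset_left)
  have e2 := h2.2.2 _ hTstrip hTint (by rw [hTeq]; exact Set.inter_subset_right)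
  have eS : ({x | c₁ ≤ cross2 d x ∧ cross2 d x ≤ c₂} : Set (ℝ × ℝ))
      = {x | a ≤ cross2 d x ∧ cross2 d x ≤ b} := by rw [← e1, e2]
  have hcc : ∀ r : ℝ, (c₁ ≤ r ∧ r ≤ c₂) ↔ (a ≤ r ∧ r ≤ b) := by
    intro r
    obtain ⟨x, hx⟩ := cross2_surj hd r
    constructor
    · intro h; have : x ∈ ({x | c₁ ≤ cross2 d x ∧ cross2 d x ≤ c₂} : Set (ℝ × ℝ)) := by
        rw [Set.mem_setOf_eq, hx]; exact h
      rw [eS, Set.mem_setOf_eq, hx] at this; exact this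
    · intro h; have : x ∈ ({x | a ≤ cross2 d x ∧ cross2 d x ≤ b} : Set (ℝ × ℝ)) := by
        rw [Set.mem_setOf_eq, hx]; exact h
      rw [← eS, Set.mem_setOf_eq, hx] at this; exact this
  constructor
  · have hA := (hcc c₁).1 ⟨le_refl _, le_of_lt hc⟩
    have hB := (hcc a).2 ⟨le_refl _, le_of_lt hab⟩
    linarith [hA.1, hB.1]
  · have hA := (hcc c₂).1 ⟨le_of_lt hc, le_refl _⟩
    have hB := (hcc b).2 ⟨le_of_lt hab, le_refl _⟩
    linarith [hA.2, hB.2]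

private lemma edge_of_two_min (Q : NicePolygon) {d : ℝ × ℝ} (hd : d ≠ 0) {c : ℝ}
    (hmin : ∀ k, c ≤ cross2 d (Q.vtx k)) {a b : ZMod Q.n}
    (ha : cross2 d (Q.vtx a) = c) (hb : cross2 d (Q.vtx b) = c) (hne : Q.vtx a ≠ Q.vtx b) :
    ∃ i, cross2 d (Q.vtx (i + 1) - Q.vtx i) = 0 ∧ cross2 d (Q.vtx i) = c := by
  have hab : a ≠ b := fun h => hne (by rw [h])
  by_cases h1 : b = a + 1
  · exact ⟨a, by rw [← h1, cross2_sub_right, ha, hb, sub_self], ha⟩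
  by_cases h2 : a = b + 1
  · exact ⟨b, by rw [← h2, cross2_sub_right, ha, hb, sub_self], hb⟩
  exfalso
  have hpar : cross2 d (Q.vtx b - Q.vtx a) = 0 := by
    rw [cross2_sub_right, ha, hb, sub_self]
  obtain ⟨μ, hμ⟩ := cross2_eq_zero_parallel hd hpar
  have hμ0 : μ ≠ 0 := by
    rintro rfl
    rw [zero_smul, sub_eq_zero] at hμ
    exact hne hμ.symm
  have hsc1 := Q.strict_convex a b (Ne.symm hab) h1
  have hsc2 := Q.strict_convex b a hab h2
  rw [hμ, cross2_smul_right] at hsc1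
  have hμ' : Q.vtx a - Q.vtx b = (-μ) • d := by rw [neg_smul, ← hμ, neg_sub]
  rw [hμ', cross2_smul_right] at hsc2
  have hEa : cross2 (Q.vtx (a + 1) - Q.vtx a) d ≤ 0 := by
    rw [cross2_skew]
    have : 0 ≤ cross2 d (Q.vtx (a + 1) - Q.vtx a) := by
      rw [cross2_sub_right, ha]; linarith [hmin (a + 1)]
    linarith
  have hEb : cross2 (Q.vtx (b + 1) - Q.vtx b) d ≤ 0 := by
    rw [cross2_skew]
    have : 0 ≤ cross2 d (Q.vtx (b + 1) - Q.vtx b) := by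
      rw [cross2_sub_right, hb]; linarith [hmin (b + 1)]
    linarith
  have hμpos : 0 < μ := by nlinarith
  nlinarith

private lemma seg_inter {d₁ d₂ : ℝ × ℝ} {c₁ c₂ b₁ b₂ : ℝ} {v₁ w₁ v₂ w₂ : ℝ × ℝ}
    (hd : cross2 d₁ d₂ ≠ 0) (hc : c₁ < c₂) (hb : b₁ < b₂)
    (hv₁ : cross2 d₁ v₁ = c₁) (hw₁ : cross2 d₁ w₁ = c₂)
    (hv₂ : cross2 d₂ v₂ = b₁) (hw₂ : cross2 d₂ w₂ = b₂)
    (h1 : c₁ ≤ cross2 d₁ v₂) (h1' : cross2 d₁ v₂ ≤ c₂)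
    (h2 : c₁ ≤ cross2 d₁ w₂) (h2' : cross2 d₁ w₂ ≤ c₂)
    (h3 : b₁ ≤ cross2 d₂ v₁) (h3' : cross2 d₂ v₁ ≤ b₂)
    (h4 : b₁ ≤ cross2 d₂ w₁) (h4' : cross2 d₂ w₁ ≤ b₂) :
    (segment ℝ v₁ w₁ ∩ segment ℝ v₂ w₂).Nonempty := by
  set A := cross2 d₁ v₂ with hA
  set B := cross2 d₁ w₂ with hB
  set G := cross2 d₂ v₁ with hG
  set H := cross2 d₂ w₁ with hH
  set T : ℝ → ℝ := fun s => (G + s * (H - G) - b₁) / (b₂ - b₁) with hT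
  set F : ℝ → ℝ := fun s => (A + T s * (B - A) - c₁) / (c₂ - c₁) with hF
  have hb0 : (0:ℝ) < b₂ - b₁ := by linarith
  have hc0 : (0:ℝ) < c₂ - c₁ := by linarith
  have hTmem : ∀ s ∈ Set.Icc (0:ℝ) 1, T s ∈ Set.Icc (0:ℝ) 1 := by
    intro s hs
    constructor
    · apply div_nonneg _ (le_of_lt hb0)
      nlinarith [hs.1, hs.2]
    · rw [div_le_one hb0]
      nlinarith [hs.1, hs.2]
  have hFmem : ∀ s ∈ Set.Icc (0:ℝ) 1, F s ∈ Set.Icc (0:ℝ) 1 := by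
    intro s hs
    have ht := hTmem s hs
    constructor
    · apply div_nonneg _ (le_of_lt hc0)
      nlinarith [ht.1, ht.2]
    · rw [div_le_one hc0]
      nlinarith [ht.1, ht.2]
  have hcont : ContinuousOn (fun s => F s - s) (Set.Icc (0:ℝ) 1) := by
    apply Continuous.continuousOn
    rw [hF, hT]
    fun_prop
  have hiv : (0:ℝ) ∈ Set.Icc (F 1 - 1) (F 0 - 0) := by
    constructor
    · have := (hFmem 1 ⟨zero_le_one, le_refl 1⟩).2; linarith
    · have := (hFmem 0 ⟨le_refl 0, zero_le_one⟩).1; linarith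
  obtain ⟨s, hs, hFs⟩ := intermediate_value_Icc' zero_le_one hcont hiv
  have hFs' : F s = s := by
    have : F s - s = 0 := hFs
    linarith
  set t := T s with htdef
  have hts := hTmem s hs
  have hfp : cross2 d₁ (v₁ + s • (w₁ - v₁)) = c₁ + s * (c₂ - c₁) := by
    rw [cross2_affine, hv₁, hw₁]
  have hgp : cross2 d₂ (v₁ + s • (w₁ - v₁)) = G + s * (H - G) := by
    rw [cross2_affine]
  have hfq : cross2 d₁ (v₂ + t • (w₂ - v₂)) = A + t * (B - A) := by
    rw [cross2_affine]
  have hgq : cross2 d₂ (v₂ + t • (w₂ - v₂)) = b₁ + t * (b₂ - b₁) := by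
    rw [cross2_affine, hv₂, hw₂]
  have e₂ : cross2 d₂ (v₁ + s • (w₁ - v₁)) = cross2 d₂ (v₂ + t • (w₂ - v₂)) := by
    rw [hgp, hgq, htdef]
    show G + s * (H - G) = b₁ + (G + s * (H - G) - b₁) / (b₂ - b₁) * (b₂ - b₁)
    field_simp
    ring
  have e₁ : cross2 d₁ (v₁ + s • (w₁ - v₁)) = cross2 d₁ (v₂ + t • (w₂ - v₂)) := by
    rw [hfp, hfq]
    have hnum : (A + T s * (B - A) - c₁) / (c₂ - c₁) = s := hFs'
    rw [div_eq_iff (ne_of_gt hc0)] at hnum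
    rw [← htdef] at hnum
    linarith
  have hx1 : (v₁ + s • (w₁ - v₁)).1 = (v₂ + t • (w₂ - v₂)).1 := by
    have h0 : ((v₁ + s • (w₁ - v₁)).1 - (v₂ + t • (w₂ - v₂)).1) * cross2 d₁ d₂ = 0 := by
      simp only [cross2] at e₁ e₂ ⊢
      linear_combination d₂.1 * e₁ - d₁.1 * e₂
    rcases mul_eq_zero.1 h0 with h | h
    · linarith
    · exact absurd h hd
  have hx2 : (v₁ + s • (w₁ - v₁)).2 = (v₂ + t • (w₂ - v₂)).2 := by
    have h0 : ((v₁ + s • (w₁ - v₁)).2 - (v₂ + t • (w₂ - v₂)).2) * cross2 d₁ d₂ = 0 := by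
      simp only [cross2] at e₁ e₂ ⊢
      linear_combination d₂.2 * e₁ - d₁.2 * e₂
    rcases mul_eq_zero.1 h0 with h | h
    · linarith
    · exact absurd h hd
  have hpq : v₁ + s • (w₁ - v₁) = v₂ + t • (w₂ - v₂) := Prod.ext hx1 hx2
  refine ⟨v₁ + s • (w₁ - v₁), ?_, ?_⟩
  · rw [segment_eq_image']
    exact ⟨s, hs, rfl⟩
  · rw [hpq, segment_eq_image']
    exact ⟨t, hts, rfl⟩

private lemma par_main (Q : NicePolygon) {d₁ d₂ : ℝ × ℝ} {lam c₁ c₂ b₁ b₂ : ℝ}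
    {p₁ p₂ q₁ q₂ : ℝ × ℝ}
    (hd₁ : d₁ ≠ 0) (hlam : 0 < lam) (hd : d₂ = lam • d₁) (hc : c₁ < c₂) (hb : b₁ < b₂)
    (hp1v : Q.IsVertex p₁) (hp2v : Q.IsVertex p₂) (hq1v : Q.IsVertex q₁) (hq2v : Q.IsVertex q₂)
    (hmin₁ : Q.IsMinimalStrip {x | c₁ ≤ cross2 d₁ x ∧ cross2 d₁ x ≤ c₂})
    (hmin₂ : Q.IsMinimalStrip {x | b₁ ≤ cross2 d₂ x ∧ cross2 d₂ x ≤ b₂})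
    (hp1 : cross2 d₁ p₁ = c₁) (hp2 : cross2 d₁ p₂ = c₂)
    (hq1 : cross2 d₂ q₁ = b₁) (hq2 : cross2 d₂ q₂ = b₂) :
    (segment ℝ p₁ p₂ ∩ segment ℝ q₁ q₂).Nonempty := by
  have key : ∀ x, cross2 d₂ x = lam * cross2 d₁ x := fun x => by rw [hd, cross2_smul_left]
  have hSeq : {x | b₁ ≤ cross2 d₂ x ∧ cross2 d₂ x ≤ b₂}
      = {x : ℝ × ℝ | b₁ / lam ≤ cross2 d₁ x ∧ cross2 d₁ x ≤ b₂ / lam} := by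
    ext x
    simp only [Set.mem_setOf_eq, key x]
    constructor
    · rintro ⟨u1, u2⟩
      constructor
      · rw [div_le_iff₀ hlam]; linarith [mul_comm lam (cross2 d₁ x)]
      · rw [le_div_iff₀ hlam]; linarith [mul_comm lam (cross2 d₁ x)]
    · rintro ⟨u1, u2⟩
      rw [div_le_iff₀ hlam] at u1
      rw [le_div_iff₀ hlam] at u2
      constructor <;> linarith [mul_comm lam (cross2 d₁ x)]
  rw [hSeq] at hmin₂
  have hbb : b₁ / lam < b₂ / lam := by
    rw [div_lt_div_iff₀ hlam hlam]
    nlinarith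
  obtain ⟨e₁, e₂⟩ := strip_consts_eq Q hd₁ hc hbb hmin₁ hmin₂
  have hq1' : cross2 d₁ q₁ = c₁ := by
    rw [e₁, eq_div_iff (ne_of_gt hlam)]
    have := key q₁
    linarith [mul_comm lam (cross2 d₁ q₁)]
  have hq2' : cross2 d₁ q₂ = c₂ := by
    rw [e₂, eq_div_iff (ne_of_gt hlam)]
    have := key q₂
    linarith [mul_comm lam (cross2 d₁ q₂)]
  by_cases hpq : p₁ = q₁
  · exact ⟨p₁, left_mem_segment ℝ p₁ p₂, by rw [hpq]; exact left_mem_segment ℝ q₁ q₂⟩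
  by_cases hpq2 : p₂ = q₂
  · exact ⟨p₂, right_mem_segment ℝ p₁ p₂, by rw [hpq2]; exact right_mem_segment ℝ q₁ q₂⟩
  exfalso
  have hall : ∀ k, c₁ ≤ cross2 d₁ (Q.vtx k) ∧ cross2 d₁ (Q.vtx k) ≤ c₂ := fun k =>
    body_sub_strip Q hd₁ hc hmin₁ _ (subset_convexHull ℝ _ ⟨k, rfl⟩)
  obtain ⟨a1, ha1⟩ := hp1v
  obtain ⟨a2, ha2⟩ := hp2v
  obtain ⟨b1, hb1⟩ := hq1v
  obtain ⟨b2, hb2⟩ := hq2v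
  obtain ⟨i, hi0, hi1⟩ := edge_of_two_min Q hd₁ (fun k => (hall k).1)
    (by rw [ha1]; exact hp1) (by rw [hb1]; exact hq1')
    (by rw [ha1, hb1]; exact hpq)
  obtain ⟨j, hj0, hj1⟩ := edge_of_two_min Q (d := -d₁) (neg_ne_zero.2 hd₁)
    (c := -c₂) (fun k => by rw [cross2_neg_left]; linarith [(hall k).2])
    (a := a2) (b := b2)
    (by rw [cross2_neg_left, ha2, hp2]) (by rw [cross2_neg_left, hb2, hq2'])
    (by rw [ha2, hb2]; exact hpq2)
  rw [cross2_neg_left, neg_eq_zero] at hj0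
  rw [cross2_neg_left] at hj1
  have hij : i ≠ j := by
    intro h
    rw [h] at hi1
    linarith [hi1, hj1]
  obtain ⟨μ, hμ⟩ := cross2_eq_zero_parallel hd₁ hi0
  obtain ⟨ν, hν⟩ := cross2_eq_zero_parallel hd₁ hj0
  apply Q.no_parallel i j hij
  show cross2 (Q.vtx (i + 1) - Q.vtx i) (Q.vtx (j + 1) - Q.vtx j) = 0
  rw [hμ, hν, cross2_smul_left, cross2_smul_right, cross2_self]
  ring

/-- Any two spokes of a nice polygon intersect. -/
theorem spokes_intersect (Q : NicePolygon) (S₁ S₂ : Set (ℝ × ℝ))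
    (h₁ : Q.IsSpoke S₁) (h₂ : Q.IsSpoke S₂) : (S₁ ∩ S₂).Nonempty := by
  obtain ⟨v₁, w₁, ⟨hv₁v, hw₁v, d₁, c₁, c₂, hd₁, hc₁, hmin₁, hor₁⟩, rfl⟩ := h₁
  obtain ⟨v₂, w₂, ⟨hv₂v, hw₂v, d₂, b₁, b₂, hd₂, hb₁, hmin₂, hor₂⟩, rfl⟩ := h₂
  obtain ⟨p₁, p₂, hps, hp1v, hp2v, hp1, hp2⟩ :
      ∃ p₁ p₂, segment ℝ v₁ w₁ = segment ℝ p₁ p₂ ∧ Q.IsVertex p₁ ∧ Q.IsVertex p₂ ∧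
        cross2 d₁ p₁ = c₁ ∧ cross2 d₁ p₂ = c₂ := by
    rcases hor₁ with ⟨h, h'⟩ | ⟨h, h'⟩
    · exact ⟨v₁, w₁, rfl, hv₁v, hw₁v, h, h'⟩
    · exact ⟨w₁, v₁, segment_symm ℝ v₁ w₁, hw₁v, hv₁v, h', h⟩
  obtain ⟨q₁, q₂, hqs, hq1v, hq2v, hq1, hq2⟩ :
      ∃ q₁ q₂, segment ℝ v₂ w₂ = segment ℝ q₁ q₂ ∧ Q.IsVertex q₁ ∧ Q.IsVertex q₂ ∧
        cross2 d₂ q₁ = b₁ ∧ cross2 d₂ q₂ = b₂ := by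
    rcases hor₂ with ⟨h, h'⟩ | ⟨h, h'⟩
    · exact ⟨v₂, w₂, rfl, hv₂v, hw₂v, h, h'⟩
    · exact ⟨w₂, v₂, segment_symm ℝ v₂ w₂, hw₂v, hv₂v, h', h⟩
  rw [hps, hqs]
  by_cases hpar : cross2 d₁ d₂ = 0
  · obtain ⟨lam, hlam⟩ := cross2_eq_zero_parallel hd₁ hpar
    have hlam0 : lam ≠ 0 := by
      rintro rfl
      rw [zero_smul] at hlam
      exact hd₂ hlam
    rcases hlam0.lt_or_gt with hneg | hpos
    · have hd' : -d₂ = (-lam) • d₁ := by rw [hlam, neg_smul]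
      have hset : {x : ℝ × ℝ | -b₂ ≤ cross2 (-d₂) x ∧ cross2 (-d₂) x ≤ -b₁}
          = {x | b₁ ≤ cross2 d₂ x ∧ cross2 d₂ x ≤ b₂} := by
        ext x
        rw [Set.mem_setOf_eq, Set.mem_setOf_eq, cross2_neg_left]
        constructor <;> rintro ⟨u1, u2⟩ <;> exact ⟨by linarith, by linarith⟩
      have hmin₂' : Q.IsMinimalStrip
          {x : ℝ × ℝ | -b₂ ≤ cross2 (-d₂) x ∧ cross2 (-d₂) x ≤ -b₁} := by
        rw [hset]; exact hmin₂
      obtain ⟨x, hx1, hx2⟩ := par_main Q hd₁ (by linarith : (0:ℝ) < -lam) hd' hc₁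
        (by linarith : -b₂ < -b₁) hp1v hp2v hq2v hq1v hmin₁ hmin₂'
        hp1 hp2 (by rw [cross2_neg_left, hq2]) (by rw [cross2_neg_left, hq1])
      exact ⟨x, hx1, by rw [segment_symm]; exact hx2⟩
    · exact par_main Q hd₁ hpos hlam hc₁ hb₁ hp1v hp2v hq1v hq2v hmin₁ hmin₂
        hp1 hp2 hq1 hq2
  · have hbody := body_sub_strip Q hd₁ hc₁ hmin₁
    have hbody2 := body_sub_strip Q hd₂ hb₁ hmin₂
    have memb : ∀ {x : ℝ × ℝ}, Q.IsVertex x → x ∈ Q.body := by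
      rintro x ⟨k, rfl⟩
      exact subset_convexHull ℝ _ ⟨k, rfl⟩
    exact seg_inter hpar hc₁ hb₁ hp1 hp2 hq1 hq2
      (hbody _ (memb hq1v)).1 (hbody _ (memb hq1v)).2
      (hbody _ (memb hq2v)).1 (hbody _ (memb hq2v)).2
      (hbody2 _ (memb hp1v)).1 (hbody2 _ (memb hp1v)).2
      (hbody2 _ (memb hp2v)).1 (hbody2 _ (memb hp2v)).2

end SpokesIntersect
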